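/- arXiv:2207.01818 — 2 statements merged into one kernel-verified Lean document; each statement's English description precedes it below -/
import Mathlib

section
/- Let m, N ≥ 1 and let A_1, …, A_m be real matrices with A_j of size N × N^j. Suppose x : ℝ → Matrix (Fin N) (Fin 1) ℝ is differentiable and satisfies the nonlinear ODE dx/dt = Σ_{j=1}^m A_j · x^⊗j for all t. Define A_j^i recursively by A_j^1 = A_j and A_j^i = A_j ⊗ I^⊗(i-1) + I ⊗ A_j^(i-1), where I is the N × N identity. Then for every i ≥ 1 the Kronecker power x^⊗i satisfies the linear relation d/dt (x(t)^⊗i) = Σ_{j=1}^m A_j^i · x(t)^⊗(i+j-1) for all t (Carleman embedding: the infinite vector X = (x, x^⊗2, x^⊗3, …) satisfies the linear system dX/dt = A_c X). -/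
open Matrix Kronecker

/-- Kronecker product of real matrices, with the index types flattened to `Fin`
along the canonical equivalences `Fin a × Fin c ≃ Fin (a * c)`. -/
noncomputable def kmul {a b c d : ℕ} (A : Matrix (Fin a) (Fin b) ℝ)
    (B : Matrix (Fin c) (Fin d) ℝ) : Matrix (Fin (a * c)) (Fin (b * d)) ℝ :=
  Matrix.reindex finProdFinEquiv finProdFinEquiv (A ⊗ₖ B)

/-- The `i`-th Kronecker power of a column vector: `x^⊗0 = (1)`, `x^⊗(i+1) = x ⊗ x^⊗i`,
a column vector of length `N ^ i`. -/
noncomputable def kpow {N : ℕ} (x : Matrix (Fin N) (Fin 1) ℝ) :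
    (i : ℕ) → Matrix (Fin (N ^ i)) (Fin 1) ℝ
  | 0 => fun _ _ => 1
  | i + 1 => Matrix.reindex (finCongr (pow_succ' N i).symm) (Equiv.refl (Fin 1))
      (kmul x (kpow x i))

/-- The Carleman transfer matrices `A_j^i` of size `N^i × N^(i+j-1)`, defined recursively by
`A_j^1 = A_j` and `A_j^i = A_j ⊗ I^⊗(i-1) + I ⊗ A_j^(i-1)` for `i ≥ 2`, where `I^⊗m` is the
`m`-fold Kronecker power of the `N × N` identity, i.e. the identity of size `N^m`. -/
noncomputable def carlemanBlock (N j : ℕ) (Aj : Matrix (Fin N) (Fin (N ^ j)) ℝ) :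
    (i : ℕ) → Matrix (Fin (N ^ i)) (Fin (N ^ (i + j - 1))) ℝ
  | 0 => 0
  | 1 => Matrix.reindex (finCongr (pow_one N).symm)
      (finCongr (by congr 1; omega : N ^ j = N ^ (1 + j - 1))) Aj
  | (i + 2) =>
      Matrix.reindex (finCongr (by rw [← pow_succ'] : N * N ^ (i + 1) = N ^ (i + 2)))
        (finCongr (by rw [← pow_add]; congr 1; omega :
          N ^ j * N ^ (i + 1) = N ^ (i + 2 + j - 1)))
        (kmul Aj (1 : Matrix (Fin (N ^ (i + 1))) (Fin (N ^ (i + 1))) ℝ))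
      +
      Matrix.reindex (finCongr (by rw [← pow_succ'] : N * N ^ (i + 1) = N ^ (i + 2)))
        (finCongr (by rw [← pow_succ']; congr 1; omega :
          N * N ^ (i + 1 + j - 1) = N ^ (i + 2 + j - 1)))
        (kmul (1 : Matrix (Fin N) (Fin N) ℝ) (carlemanBlock N j Aj (i + 1)))

/-!
Induction on `i` via the product rule: `x^⊗(i+1) = x ⊗ x^⊗i` has derivative
`ẋ ⊗ x^⊗i + x ⊗ (x^⊗i)'`. Substituting the ODE for `ẋ` and the induction hypothesis for
`(x^⊗i)'`, the mixed-product rule `(A ⊗ B)(u ⊗ v) = Au ⊗ Bv` together with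
`x^⊗j ⊗ x^⊗i = x^⊗(i+j)` identifies the two terms with the two summands of `A_j^(i+1) x^⊗(i+j)`.
-/

namespace Fin

variable {a c e : ℕ}

theorem divNat_divNat (p : Fin (a * c * e)) :
    p.divNat.divNat = (p.cast (mul_assoc a c e)).divNat := by
  ext; simp [Nat.div_div_eq_div_mul, Nat.mul_comm e c]

theorem modNat_divNat (p : Fin (a * c * e)) :
    p.divNat.modNat = (p.cast (mul_assoc a c e)).modNat.divNat := by
  ext; simp [Nat.mul_comm c e, Nat.mod_mul_right_div_self]

theorem modNat_eq_modNat_modNat (p : Fin (a * c * e)) :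
    p.modNat = (p.cast (mul_assoc a c e)).modNat.modNat := by
  ext; simp [Nat.mod_mod_of_dvd]

end Fin

theorem Matrix.reindex_mul_reindex {α l m n o p q : Type*} [Fintype n] [Fintype o]
    [NonUnitalNonAssocSemiring α] (e₁ : l ≃ m) (e₂ : n ≃ o) (e₃ : p ≃ q)
    (M : Matrix l n α) (N : Matrix n p α) :
    reindex e₁ e₂ M * reindex e₂ e₃ N = reindex e₁ e₃ (M * N) := by
  simp only [reindex_apply, submatrix_mul_equiv]

section Kronecker

variable {a b c d e f : ℕ}

theorem kmul_apply (A : Matrix (Fin a) (Fin b) ℝ) (B : Matrix (Fin c) (Fin d) ℝ)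
    (p : Fin (a * c)) (q : Fin (b * d)) :
    kmul A B p q = A p.divNat q.divNat * B p.modNat q.modNat := rfl

theorem kmul_mul_kmul (A : Matrix (Fin a) (Fin b) ℝ) (B : Matrix (Fin c) (Fin d) ℝ)
    (C : Matrix (Fin b) (Fin e) ℝ) (D : Matrix (Fin d) (Fin f) ℝ) :
    kmul A B * kmul C D = kmul (A * C) (B * D) := by
  simp only [kmul, reindex_apply, submatrix_mul_equiv, mul_kronecker_mul]

theorem kmul_sum {ι : Type*} (s : Finset ι) (A : Matrix (Fin a) (Fin b) ℝ)
    (B : ι → Matrix (Fin c) (Fin d) ℝ) : kmul A (∑ k ∈ s, B k) = ∑ k ∈ s, kmul A (B k) := by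
  ext p q
  simp only [kmul_apply, Matrix.sum_apply, Finset.mul_sum]

theorem sum_kmul {ι : Type*} (s : Finset ι) (A : ι → Matrix (Fin a) (Fin b) ℝ)
    (B : Matrix (Fin c) (Fin d) ℝ) : kmul (∑ k ∈ s, A k) B = ∑ k ∈ s, kmul (A k) B := by
  ext p q
  simp only [kmul_apply, Matrix.sum_apply, Finset.sum_mul]

theorem kmul_assoc (A : Matrix (Fin a) (Fin b) ℝ) (B : Matrix (Fin c) (Fin d) ℝ)
    (C : Matrix (Fin e) (Fin f) ℝ) :
    kmul (kmul A B) C =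
      reindex (finCongr (mul_assoc a c e).symm) (finCongr (mul_assoc b d f).symm)
        (kmul A (kmul B C)) := by
  ext p q
  simp only [kmul_apply, reindex_apply, submatrix_apply, finCongr_symm, finCongr_apply,
    Fin.divNat_divNat, Fin.modNat_divNat, Fin.modNat_eq_modNat_modNat p,
    Fin.modNat_eq_modNat_modNat q, mul_assoc]

theorem kmul_reindex_left {a' b' : ℕ} (h₁ : a = a') (h₂ : b = b')
    (A : Matrix (Fin a) (Fin b) ℝ) (B : Matrix (Fin c) (Fin d) ℝ) :
    kmul (reindex (finCongr h₁) (finCongr h₂) A) B =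
      reindex (finCongr (congrArg (· * c) h₁)) (finCongr (congrArg (· * d) h₂)) (kmul A B) := by
  subst h₁ h₂; simp

theorem kmul_reindex_right {c' d' : ℕ} (h₁ : c = c') (h₂ : d = d')
    (A : Matrix (Fin a) (Fin b) ℝ) (B : Matrix (Fin c) (Fin d) ℝ) :
    kmul A (reindex (finCongr h₁) (finCongr h₂) B) =
      reindex (finCongr (congrArg (a * ·) h₁)) (finCongr (congrArg (b * ·) h₂)) (kmul A B) := by
  subst h₁ h₂; simp

end Kronecker

section KroneckerPower

variable {N : ℕ} (x : Matrix (Fin N) (Fin 1) ℝ)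

theorem kpow_succ (i : ℕ) :
    kpow x (i + 1) = reindex (finCongr (pow_succ' N i).symm) (Equiv.refl _) (kmul x (kpow x i)) :=
  rfl

theorem kpow_congr {a b : ℕ} (h : a = b) :
    kpow x b = reindex (finCongr (congrArg (N ^ ·) h)) (Equiv.refl _) (kpow x a) := by
  subst h; simp

theorem kpow_one : kpow x 1 = reindex (finCongr (pow_one N).symm) (Equiv.refl _) x := by
  ext p q
  exact (mul_one _).trans (congrArg₂ x (Fin.ext (Nat.div_one _)) (Subsingleton.elim _ _))

theorem kpow_add (a b : ℕ) :
    kpow x (a + b) =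
      reindex (finCongr (pow_add N a b).symm) (Equiv.refl _) (kmul (kpow x a) (kpow x b)) := by
  induction a with
  | zero =>
    rw [kpow_congr x (zero_add b).symm]
    ext p q
    simp only [reindex_apply, submatrix_apply, kmul_apply]
    refine (one_mul _).symm.trans (congrArg₂ _ rfl (congrArg₂ _ ?_ ?_)) <;> ext
    · exact (Nat.mod_eq_of_lt (by simpa using p.is_lt)).symm
    · simp
  | succ a ih =>
    rw [kpow_congr x (Nat.add_right_comm a b 1), kpow_succ, ih, kpow_succ,
      ← finCongr_refl (rfl : 1 = 1), kmul_reindex_right, kmul_reindex_left, kmul_assoc]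
    -- both sides are `kmul x (kmul (kpow x a) (kpow x b))` reindexed along `finCongr`s
    ext p q
    rfl

theorem kpow_add_of_eq {a b c : ℕ} (h : a + b = c) :
    kpow x c =
      reindex (finCongr (by rw [← h, pow_add])) (Equiv.refl _) (kmul (kpow x a) (kpow x b)) := by
  subst h; exact kpow_add x a b

theorem kpow_succ_of_eq {a c : ℕ} (h : a + 1 = c) :
    kpow x c = reindex (finCongr (by rw [← h, pow_succ'])) (Equiv.refl _) (kmul x (kpow x a)) := by
  subst h; exact kpow_succ x a

end KroneckerPower

section CarlemanBlock

variable {N j : ℕ} (Aj : Matrix (Fin N) (Fin (N ^ j)) ℝ) (x : Matrix (Fin N) (Fin 1) ℝ)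

theorem carlemanBlock_one_mul_kpow :
    carlemanBlock N j Aj 1 * kpow x (1 + j - 1) =
      reindex (finCongr (pow_one N).symm) (Equiv.refl _) (Aj * kpow x j) := by
  rw [kpow_congr x (show j = 1 + j - 1 by omega), carlemanBlock, Matrix.reindex_mul_reindex]

theorem carlemanBlock_add_two_mul_kpow (i : ℕ) :
    carlemanBlock N j Aj (i + 2) * kpow x (i + 2 + j - 1) =
      reindex (finCongr (pow_succ' N (i + 1)).symm) (Equiv.refl _)
        (kmul (Aj * kpow x j) (kpow x (i + 1)) +
          kmul x (carlemanBlock N j Aj (i + 1) * kpow x (i + 1 + j - 1))) := by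
  rw [carlemanBlock, Matrix.add_mul]
  nth_rw 1 [kpow_add_of_eq x (show j + (i + 1) = i + 2 + j - 1 by omega)]
  rw [kpow_succ_of_eq x (show i + 1 + j - 1 + 1 = i + 2 + j - 1 by omega),
    Matrix.reindex_mul_reindex, Matrix.reindex_mul_reindex, kmul_mul_kmul, kmul_mul_kmul,
    Matrix.one_mul, Matrix.one_mul, ← coe_reindexAddEquiv ℝ, map_add]

end CarlemanBlock

def HasEntrywiseDerivAt {m n : Type*} (f : ℝ → Matrix m n ℝ) (f' : Matrix m n ℝ) (t : ℝ) : Prop :=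
  ∀ p q, HasDerivAt (fun s => f s p q) (f' p q) t

namespace HasEntrywiseDerivAt

variable {t : ℝ}

theorem reindex {m n m' n' : Type*} {f : ℝ → Matrix m n ℝ} {f' : Matrix m n ℝ}
    (e₁ : m ≃ m') (e₂ : n ≃ n') (hf : HasEntrywiseDerivAt f f' t) :
    HasEntrywiseDerivAt (fun s => reindex e₁ e₂ (f s)) (reindex e₁ e₂ f') t :=
  fun _ _ => hf _ _

theorem kmul {a b c d : ℕ} {f : ℝ → Matrix (Fin a) (Fin b) ℝ} {g : ℝ → Matrix (Fin c) (Fin d) ℝ}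
    {f' : Matrix (Fin a) (Fin b) ℝ} {g' : Matrix (Fin c) (Fin d) ℝ}
    (hf : HasEntrywiseDerivAt f f' t) (hg : HasEntrywiseDerivAt g g' t) :
    HasEntrywiseDerivAt (fun s => kmul (f s) (g s)) (kmul f' (g t) + kmul (f t) g') t :=
  fun _ _ => (hf _ _).mul (hg _ _)

end HasEntrywiseDerivAt

theorem kpow_hasEntrywiseDerivAt {N : ℕ} {s : Finset ℕ}
    {A : (j : ℕ) → Matrix (Fin N) (Fin (N ^ j)) ℝ} {x : ℝ → Matrix (Fin N) (Fin 1) ℝ}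
    (hx : ∀ t, HasEntrywiseDerivAt x (∑ j ∈ s, A j * kpow (x t) j) t) (i : ℕ) (t : ℝ) :
    HasEntrywiseDerivAt (fun τ => kpow (x τ) (i + 1))
      (∑ j ∈ s, carlemanBlock N j (A j) (i + 1) * kpow (x t) (i + 1 + j - 1)) t := by
  induction i with
  | zero =>
    change HasEntrywiseDerivAt (fun τ => kpow (x τ) 1)
      (∑ j ∈ s, carlemanBlock N j (A j) 1 * kpow (x t) (1 + j - 1)) t
    simp only [kpow_one, carlemanBlock_one_mul_kpow]
    rw [← coe_reindexAddEquiv ℝ, ← map_sum]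
    exact (hx t).reindex _ _
  | succ i ih =>
    have hprod := ((hx t).kmul ih).reindex (finCongr (pow_succ' N (i + 1)).symm) (Equiv.refl _)
    simp only [sum_kmul, kmul_sum, ← Finset.sum_add_distrib] at hprod
    simp only [carlemanBlock_add_two_mul_kpow]
    rw [← coe_reindexAddEquiv ℝ, ← map_sum]
    exact hprod

theorem carleman_embedding_general (m N : ℕ)
    (A : (j : ℕ) → Matrix (Fin N) (Fin (N ^ j)) ℝ)
    (x : ℝ → Matrix (Fin N) (Fin 1) ℝ)
    (hx : ∀ t : ℝ, ∀ (p : Fin N) (q : Fin 1),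
      HasDerivAt (fun s => x s p q)
        ((∑ j ∈ Finset.Icc 1 m, A j * kpow (x t) j) p q) t) :
    ∀ i : ℕ, 1 ≤ i → ∀ t : ℝ, ∀ (p : Fin (N ^ i)) (q : Fin 1),
      HasDerivAt (fun s => kpow (x s) i p q)
        ((∑ j ∈ Finset.Icc 1 m, carlemanBlock N j (A j) i * kpow (x t) (i + j - 1)) p q)
        t := by
  intro i hi t
  obtain ⟨k, rfl⟩ := Nat.exists_eq_add_of_le' hi
  exact kpow_hasEntrywiseDerivAt hx k t

/-- Carleman embedding: if `x` solves the nonlinear ODE `dx/dt = ∑_{j=1}^m A_j · x^⊗j`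
(entrywise), then for every `i ≥ 1` the Kronecker power `x^⊗i` solves the linear relation
`d/dt (x^⊗i) = ∑_{j=1}^m A_j^i · x^⊗(i+j-1)`; i.e. the infinite vector
`X = (x, x^⊗2, x^⊗3, …)` satisfies the linear system `dX/dt = A_c X`. -/
theorem carleman_embedding (m N : ℕ) (hm : 1 ≤ m) (hN : 1 ≤ N)
    (A : (j : ℕ) → Matrix (Fin N) (Fin (N ^ j)) ℝ)
    (x : ℝ → Matrix (Fin N) (Fin 1) ℝ)
    (hx : ∀ t : ℝ, ∀ (p : Fin N) (q : Fin 1),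
      HasDerivAt (fun s => x s p q)
        ((∑ j ∈ Finset.Icc 1 m, A j * kpow (x t) j) p q) t) :
    ∀ i : ℕ, 1 ≤ i → ∀ t : ℝ, ∀ (p : Fin (N ^ i)) (q : Fin 1),
      HasDerivAt (fun s => kpow (x s) i p q)
        ((∑ j ∈ Finset.Icc 1 m, carlemanBlock N j (A j) i * kpow (x t) (i + j - 1)) p q)
        t :=
  carleman_embedding_general m N A x hx
end

section
/- Let α ∈ ℝ, n ≥ 1, and let M be the n × n real matrix with M(k, k+1) = -(k+1)·α for 0 ≤ k ≤ n-2 and all other entries zero (the order-n truncated Carleman matrix of ẏ = -α y²). Let Y : ℝ → ℝ^n be the solution of the linear ODE Y'(t) = M · Y(t) with Y(0) = (1, 1, …, 1)^T. Then the first component of Y is the partial geometric sum: Y₁(t) = Σ_{k=0}^{n-1} (-α t)^k for all t ∈ ℝ. -/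
open Matrix Finset

/-!
A solution of `Y' = M Y` is determined by `Y 0`, the vector field being linear, hence Lipschitz.
Since `y(t) = 1 / (1 + α t)`, the natural candidate is the truncation of
`y(t)^(k+1) = ∑ⱼ C(k+j, j) (-α t)ʲ` to its first `n - k` terms. It solves the truncated system
because `(j + 1) C(k+j+1, j+1) = (k + 1) C(k+1+j, j)` turns the derivative of the `k`-th
truncation into `k + 1` times the `(k+1)`-st one; its first component is the geometric sum.
-/

theorem Matrix.eq_of_hasDerivAt_mulVec {ι : Type*} [Fintype ι] (M : Matrix ι ι ℝ)
    {Y Z : ℝ → ι → ℝ} (hY : ∀ t, HasDerivAt Y (M *ᵥ Y t) t)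
    (hZ : ∀ t, HasDerivAt Z (M *ᵥ Z t) t) {t₀ : ℝ} (h₀ : Y t₀ = Z t₀) : Y = Z :=
  ODE_solution_unique_univ (v := fun _ => M.mulVecLin.toContinuousLinearMap)
    (s := fun _ => Set.univ) (fun _ => M.mulVecLin.toContinuousLinearMap.lipschitz.lipschitzOnWith)
    (fun t => ⟨hY t, trivial⟩) (fun t => ⟨hZ t, trivial⟩) h₀

theorem Matrix.mulVec_of_superdiag {R : Type*} [NonUnitalNonAssocSemiring R] {n : ℕ}
    (c : ℕ → R) (M : Matrix (Fin n) (Fin n) R)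
    (hM : ∀ k l : Fin n, M k l = if (l : ℕ) = (k : ℕ) + 1 then c k else 0)
    (v : Fin n → R) (k : Fin n) :
    (M *ᵥ v) k = if h : (k : ℕ) + 1 < n then c k * v ⟨k + 1, h⟩ else 0 := by
  simp only [mulVec, dotProduct, hM, ite_mul, zero_mul]
  split_ifs with h
  · rw [Finset.sum_eq_single_of_mem ⟨k + 1, h⟩ (mem_univ _)]
    · simp
    · intro l _ hl
      exact if_neg fun h' => hl (Fin.ext h')
  · exact Finset.sum_eq_zero fun l _ => if_neg fun h' : (l : ℕ) = k + 1 => h (h' ▸ l.isLt)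

def truncBinomialSeries (m k : ℕ) (x : ℝ) : ℝ :=
  ∑ j ∈ range m, ((k + j).choose j : ℝ) * x ^ j

theorem truncBinomialSeries_zero_left (k : ℕ) (x : ℝ) : truncBinomialSeries 0 k x = 0 := by
  simp [truncBinomialSeries]

theorem truncBinomialSeries_succ_apply_zero (m k : ℕ) : truncBinomialSeries (m + 1) k 0 = 1 := by
  simp [truncBinomialSeries, Finset.sum_range_succ']

theorem truncBinomialSeries_zero_right (m : ℕ) (x : ℝ) :
    truncBinomialSeries m 0 x = ∑ j ∈ range m, x ^ j := by
  simp [truncBinomialSeries]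

theorem hasDerivAt_truncBinomialSeries (m k : ℕ) (x : ℝ) :
    HasDerivAt (truncBinomialSeries (m + 1) k)
      ((k + 1) * truncBinomialSeries m (k + 1) x) x := by
  have hsum : HasDerivAt (truncBinomialSeries (m + 1) k)
      (∑ j ∈ range (m + 1), ((k + j).choose j : ℝ) * (j * x ^ (j - 1))) x :=
    HasDerivAt.fun_sum fun j _ => (hasDerivAt_pow j x).const_mul _
  convert hsum using 1
  rw [Finset.sum_range_succ', truncBinomialSeries, Finset.mul_sum]
  simp only [Nat.cast_zero, zero_mul, mul_zero, add_zero, Nat.add_sub_cancel]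
  refine Finset.sum_congr rfl fun i _ => ?_
  have hchoose : (k + i + 1).choose (i + 1) * (i + 1) = (k + 1 + i).choose i * (k + 1) := by
    rw [Nat.choose_succ_right_eq, add_right_comm, Nat.add_sub_cancel]
  have h := congrArg (Nat.cast : ℕ → ℝ) hchoose
  push_cast at h
  rw [← add_assoc]
  push_cast
  linear_combination (-x ^ i) * h

def carlemanSolution (α : ℝ) (n : ℕ) (t : ℝ) (k : Fin n) : ℝ :=
  truncBinomialSeries (n - k) k (-α * t)

theorem hasDerivAt_carlemanSolution (α : ℝ) {n : ℕ} (M : Matrix (Fin n) (Fin n) ℝ)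
    (hM : ∀ k l : Fin n, M k l =
      if (l : ℕ) = (k : ℕ) + 1 then -(((k : ℕ) : ℝ) + 1) * α else 0) (t : ℝ) :
    HasDerivAt (carlemanSolution α n) (M *ᵥ carlemanSolution α n t) t := by
  rw [hasDerivAt_pi]
  intro k
  obtain ⟨m, hm⟩ : ∃ m, n - k = m + 1 := ⟨n - k - 1, by omega⟩
  have hlin : HasDerivAt (fun s : ℝ => -α * s) (-α) t := by
    simpa using (hasDerivAt_id t).const_mul (-α)
  have hk := (hasDerivAt_truncBinomialSeries m k (-α * t)).comp t hlin
  have hcomp : (fun s => carlemanSolution α n s k) =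
      truncBinomialSeries (m + 1) k ∘ fun s => -α * s := by
    funext s
    simp only [carlemanSolution, hm, Function.comp_apply]
  rw [hcomp]
  refine hk.congr_deriv ?_
  rw [mulVec_of_superdiag (fun k => -((k : ℝ) + 1) * α) M hM]
  split_ifs with h
  · have hm' : n - (k + 1) = m := by omega
    simp only [carlemanSolution, hm']
    ring
  · simp [show m = 0 by omega, truncBinomialSeries_zero_left]

theorem carlemanSolution_zero (α : ℝ) (n : ℕ) : carlemanSolution α n 0 = fun _ => 1 := by
  funext k
  obtain ⟨m, hm⟩ : ∃ m, n - k = m + 1 := ⟨n - k - 1, by omega⟩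
  simp [carlemanSolution, hm, truncBinomialSeries_succ_apply_zero]

/-- Let `M` be the order-`n` truncated Carleman matrix of `ẏ = -α y²` and let `Y` solve the
linear system `Y' = M *ᵥ Y` with `Y 0 = (1, …, 1)ᵀ`. Then the first component of `Y` is the
partial geometric sum `Y₁ t = ∑_{k=0}^{n-1} (-α t)^k`. -/
theorem truncated_carleman_first_component (α : ℝ) (n : ℕ) (hn : 1 ≤ n)
    (M : Matrix (Fin n) (Fin n) ℝ)
    (hM : ∀ k l : Fin n, M k l =
      if (l : ℕ) = (k : ℕ) + 1 then -(((k : ℕ) : ℝ) + 1) * α else 0)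
    (Y : ℝ → Fin n → ℝ)
    (hY : ∀ t, HasDerivAt Y (M *ᵥ Y t) t)
    (hY0 : Y 0 = fun _ => 1) :
    ∀ t : ℝ, Y t ⟨0, hn⟩ = ∑ k ∈ Finset.range n, (-α * t) ^ k := by
  have hYZ : Y = carlemanSolution α n :=
    M.eq_of_hasDerivAt_mulVec hY (hasDerivAt_carlemanSolution α M hM)
      (hY0.trans (carlemanSolution_zero α n).symm)
  intro t
  rw [hYZ, carlemanSolution, Fin.val_mk, Nat.sub_zero, truncBinomialSeries_zero_right]
end
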